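/- arXiv:gr-qc/0605097 — 3 statements merged into one kernel-verified Lean document; each statement's English description precedes it below -/
import Mathlib

section
/- Let Ω ≥ 1, C ≥ 0, M > 0, R > 0 with 0 < 2M/R < 1. If M ≤ 2(Ω+1)(1+C)·M·√(1 - 2M/R)/(1 + √(1 - 2M/R)), then 2M/R ≤ ((2Ω+1+2(Ω+1)C)² - 1)/(2Ω+1+2(Ω+1)C)². -/
theorem stmt_1 (Ω C M R : ℝ) (hΩ : 1 ≤ Ω) (hC : 0 ≤ C) (hM : 0 < M) (hR : 0 < R)
    (h0 : 0 < 2*M/R) (hlt : 2*M/R < 1)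
    (h : M ≤ 2*(Ω+1)*(1+C)*M*Real.sqrt (1 - 2*M/R) / (1 + Real.sqrt (1 - 2*M/R))) :
    2*M/R ≤ ((2*Ω+1+2*(Ω+1)*C)^2 - 1)/(2*Ω+1+2*(Ω+1)*C)^2 := by
  set s := Real.sqrt (1 - 2*M/R) with hs
  have hpos : (0:ℝ) < 1 - 2*M/R := by linarith
  have hs0 : 0 < s := Real.sqrt_pos.mpr hpos
  have hs2 : s^2 = 1 - 2*M/R := Real.sq_sqrt hpos.le
  have hden : 0 < 1 + s := by linarith
  have h1 : M * (1 + s) ≤ 2*(Ω+1)*(1+C)*M*s := (le_div_iff₀ hden).mp h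
  have h2 : 1 + s ≤ 2*(Ω+1)*(1+C)*s := by
    have := mul_le_mul_of_nonneg_left h1 (le_of_lt (inv_pos.mpr hM))
    field_simp at this ⊢
    nlinarith
  set K := 2*Ω+1+2*(Ω+1)*C with hK
  have hK3 : (3:ℝ) ≤ K := by nlinarith
  have hKpos : (0:ℝ) < K := by linarith
  have hsK : 1 ≤ K * s := by nlinarith
  have hgoal : 2*M/R ≤ 1 - 1/K^2 := by
    have : 1/K^2 ≤ s^2 := by
      rw [div_le_iff₀ (by positivity)]
      nlinarith
    linarith [hs2 ▸ this]
  have : 1 - 1/K^2 = (K^2 - 1)/K^2 := by field_simp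
  linarith [this ▸ hgoal]
end

section
/- Let Ω ≥ 1, a > 0, K ≥ 5/4 + 3Ω/4, and κ = 1/(2Ω+1 + 2(Ω+1)²(K+a)/(2Ω+1))². Then 1 - (2Ω+3)κ - (Ω+1)(1-κ)e^{-4K/9} > 0. -/
set_option maxHeartbeats 1000000 in
theorem stmt_10 (Ω a K κ : ℝ) (hΩ : 1 ≤ Ω) (ha : 0 < a) (hK : 5/4 + 3*Ω/4 ≤ K)
    (hκ : κ = 1 / (2*Ω+1 + 2*(Ω+1)^2*(K+a)/(2*Ω+1))^2) :
    0 < 1 - (2*Ω+3)*κ - (Ω+1)*(1-κ)*Real.exp (-4*K/9) := by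
  have h2Ω : (0:ℝ) < 2*Ω+1 := by linarith
  have hKpos : (0:ℝ) < K := by linarith
  have hfrac : 2*(K+a) ≤ 2*(Ω+1)^2*(K+a)/(2*Ω+1) := by
    rw [le_div_iff₀ h2Ω]; nlinarith [sq_nonneg Ω]
  obtain ⟨D, hD⟩ : ∃ D, D = 2*Ω+1 + 2*(Ω+1)^2*(K+a)/(2*Ω+1) := ⟨_, rfl⟩
  rw [← hD] at hκ
  have hDgt : 7*(Ω+1)/2 < D := by
    have h1 : 2*Ω+1 + 2*(K+a) ≤ D := by rw [hD]; linarith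
    linarith
  have hDpos : 0 < D := by linarith
  have hκpos : 0 < κ := by rw [hκ]; positivity
  have hκlt : (2*Ω+3)*κ < 5/49 := by
    rw [hκ, mul_one_div, div_lt_div_iff₀ (by positivity) (by norm_num : (0:ℝ) < 49)]
    have hsq : (7*(Ω+1)/2)^2 < D^2 :=
      pow_lt_pow_left₀ hDgt (by positivity) (by norm_num)
    have hsq' : 49*(Ω+1)^2/4 < D^2 := by nlinarith [hsq]
    have hp : (0:ℝ) ≤ 5*Ω^2 + 2*Ω - 7 := by nlinarith
    nlinarith [hsq', hp]
  -- Bound the exponential term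
  have hE : Real.exp (-4*K/9) ≤ Real.exp (-(Ω+1)/3) * Real.exp (-2/9) := by
    rw [← Real.exp_add]
    apply Real.exp_le_exp.mpr
    linarith
  have hEpos := Real.exp_pos (-4*K/9)
  have hE2pos := Real.exp_pos (-2/9 : ℝ)
  have hte : (Ω+1) * Real.exp (-(Ω+1)/3) ≤ 3 * Real.exp (-1) := by
    have h1 := Real.add_one_le_exp ((Ω+1)/3 - 1)
    have h2 : Real.exp ((Ω+1)/3 - 1) * Real.exp (-(Ω+1)/3) = Real.exp (-1) := by
      rw [← Real.exp_add]; ring_nf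
    have h3 := Real.exp_pos (-(Ω+1)/3)
    nlinarith
  have hexp119 : 3 * (Real.exp (-1) * Real.exp (-2/9)) < 44/49 := by
    have h1 : Real.exp (-1) * Real.exp (-2/9 : ℝ) = 1 / Real.exp (11/9) := by
      rw [← Real.exp_add, show (-1:ℝ) + -2/9 = -(11/9) by norm_num, Real.exp_neg, one_div]
    have h2 : (2.7182818283 : ℝ) < Real.exp 1 := Real.exp_one_gt_d9
    have h3 : (10/9 : ℝ) ≤ Real.exp (1/9) := by
      have := Real.add_one_le_exp (1/9 : ℝ); linarith
    have h4 : Real.exp (11/9 : ℝ) = Real.exp 1 * Real.exp (1/9) * Real.exp (1/9) := by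
      rw [← Real.exp_add, ← Real.exp_add]; norm_num
    have e1p : (0:ℝ) < Real.exp 1 := Real.exp_pos 1
    have hsq19 : (100/81 : ℝ) ≤ Real.exp (1/9) * Real.exp (1/9) := by nlinarith
    have h5 : (147/44 : ℝ) < Real.exp (11/9) := by
      rw [h4]
      nlinarith [hsq19, h2, e1p]
    rw [h1, mul_one_div, div_lt_div_iff₀ (Real.exp_pos _) (by norm_num : (0:ℝ) < 49)]
    linarith [h5]
  have hΩ1pos : (0:ℝ) < Ω + 1 := by linarith
  have hA : (Ω+1)*(1-κ)*Real.exp (-4*K/9) ≤ (Ω+1)*Real.exp (-4*K/9) := by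
    have key : (Ω+1)*(1-κ)*Real.exp (-4*K/9)
        = (Ω+1)*Real.exp (-4*K/9) - ((Ω+1)*Real.exp (-4*K/9))*κ := by ring
    rw [key]
    have h := mul_nonneg (mul_nonneg hΩ1pos.le hEpos.le) hκpos.le
    linarith
  have hB : (Ω+1)*Real.exp (-4*K/9) ≤ (Ω+1)*(Real.exp (-(Ω+1)/3) * Real.exp (-2/9)) :=
    mul_le_mul_of_nonneg_left hE (by linarith)
  have hC : (Ω+1)*(Real.exp (-(Ω+1)/3) * Real.exp (-2/9)) ≤ 3 * (Real.exp (-1) * Real.exp (-2/9)) := by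
    simpa [mul_assoc] using mul_le_mul_of_nonneg_right hte hE2pos.le
  linarith
end

section
/- Let Ω ≥ 1, M > 0, R₁ > 0 with 0 < 2M/R₁ < 1, and suppose M ≤ 2(Ω+1)M√(1-2M/R₁)/(1+√(1-2M/R₁)) + S₂ where 0 ≤ S₂ ≤ (Ω+1)M√(1-2M/R₁)·δ for some δ ≥ 0. Then 2M/R₁ ≤ ((2Ω+1+2(Ω+1)δ)² - 1)/(2Ω+1+2(Ω+1)δ)². -/
theorem stmt_15 (Ω M R1 S2 δ : ℝ) (hΩ : 1 ≤ Ω) (hM : 0 < M) (hR1 : 0 < R1)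
    (h0 : 0 < 2*M/R1) (hlt : 2*M/R1 < 1) (hδ : 0 ≤ δ)
    (hS2l : 0 ≤ S2) (hS2u : S2 ≤ (Ω+1)*M*Real.sqrt (1 - 2*M/R1) * δ)
    (h : M ≤ 2*(Ω+1)*M*Real.sqrt (1 - 2*M/R1)/(1 + Real.sqrt (1 - 2*M/R1)) + S2) :
    2*M/R1 ≤ ((2*Ω+1+2*(Ω+1)*δ)^2 - 1)/(2*Ω+1+2*(Ω+1)*δ)^2 := by
  set s := Real.sqrt (1 - 2*M/R1) with hs
  have hpos : (0:ℝ) < 1 - 2*M/R1 := by linarith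
  have hs2 : s^2 = 1 - 2*M/R1 := Real.sq_sqrt hpos.le
  have hsp : 0 < s := Real.sqrt_pos.mpr hpos
  have hsle : s ≤ 1 := by
    rw [hs]; exact Real.sqrt_le_one.mpr (by linarith)
  have h1s : (0:ℝ) < 1 + s := by linarith
  have h' : M*(1+s) ≤ 2*(Ω+1)*M*s + S2*(1+s) := by
    have := mul_le_mul_of_nonneg_right h h1s.le
    rwa [add_mul, div_mul_cancel₀ _ h1s.ne'] at this
  have hC : (0:ℝ) < 2*Ω+1+2*(Ω+1)*δ := by nlinarith
  have hkey : 1 ≤ s * (2*Ω+1+2*(Ω+1)*δ) := by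
    nlinarith [mul_le_mul_of_nonneg_right hS2u h1s.le, mul_pos hM hsp,
      mul_nonneg (mul_nonneg (by nlinarith : (0:ℝ) ≤ (Ω+1)*M) hsp.le) hδ]
  have h2M : 2*M/R1 = 1 - s^2 := by linarith
  rw [h2M, le_div_iff₀ (by positivity)]
  nlinarith [mul_le_mul hkey hkey (by norm_num) (mul_nonneg hsp.le hC.le)]
end
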